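/- In the setting of the previous convergence lemma, assume in addition that each χ_i lies in the cone ℝ_{≥0}{λ_j : j ∈ J}. Then for every choice of real numbers σ_i > −c (i ∈ I), the integral ∫_C exp(−f(x) − N ∑_{j∈J} max(0,−λ_j(x)) − ∑_{i∈I} σ_i χ_i(x)) dx converges for all sufficiently large N (depending on max_i σ_i). -/

import Mathlib

open MeasureTheory

/-!
On the compact set `S` = unit sphere ∩ `C`, `f` is positive wherever the penalty
`φ = ∑ⱼ (λⱼ)₋` vanishes, so by compactness `f + N₁ φ - c ψ ≥ δ > 0` on `S` for some `N₁`,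
`c, δ > 0`, where `ψ = ∑ᵢ (χᵢ)₊`; by homogeneity this becomes `≥ δ ‖x‖` on `C`. Since each `χᵢ`
is a nonnegative combination of the `λⱼ`, its negative part is controlled by `φ`, so for
`σᵢ ≥ -c` the term `∑ᵢ σᵢ χᵢ` is at least `-c ψ - E φ`, and `E φ` is absorbed once
`N ≥ N₁ + E`. The integrand is then dominated by `exp (-δ ‖x‖)` on `C`.
-/

section ExpDecay

variable {W : Type*} [NormedAddCommGroup W] [NormedSpace ℝ W] [FiniteDimensional ℝ W]
  [MeasurableSpace W] [BorelSpace W]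

-- `(a (1 + t))ⁿ / n! ≤ exp (a (1 + t))` dominates `exp (-a t)` by a multiple of `(1 + t)⁻ⁿ`,
-- which is integrable once `n > dim W`.
theorem integrable_exp_neg_mul_norm (μ : Measure W) [μ.IsAddHaarMeasure] {a : ℝ}
    (ha : 0 < a) : Integrable (fun x : W => Real.exp (-(a * ‖x‖))) μ := by
  set n := Module.finrank ℝ W + 1
  have hint : Integrable (fun x : W => (1 + ‖x‖) ^ (-(n : ℝ))) μ :=
    integrable_one_add_norm (by exact_mod_cast Nat.lt_succ_self _)
  refine (hint.const_mul (Real.exp a * n.factorial / a ^ n)).mono'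
    (by fun_prop) (Filter.Eventually.of_forall fun x => ?_)
  have ht : 0 < 1 + ‖x‖ := by positivity
  have hfac := Real.pow_div_factorial_le_exp _ (mul_pos ha ht).le n
  rw [Real.norm_eq_abs, abs_of_pos (Real.exp_pos _), Real.rpow_neg ht.le, Real.rpow_natCast]
  calc Real.exp (-(a * ‖x‖)) = Real.exp a * (Real.exp (a * (1 + ‖x‖)))⁻¹ := by
        rw [← Real.exp_neg, ← Real.exp_add]; ring_nf
    _ ≤ Real.exp a * ((a * (1 + ‖x‖)) ^ n / n.factorial)⁻¹ := by
        gcongr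
    _ = Real.exp a * n.factorial / a ^ n * ((1 + ‖x‖) ^ n)⁻¹ := by
        rw [mul_pow]; field_simp

theorem integrableOn_exp_of_le_neg_mul_norm (μ : Measure W) [μ.IsAddHaarMeasure] {C : Set W}
    (hC : MeasurableSet C) {h : W → ℝ} (hh : Continuous h) {a : ℝ} (ha : 0 < a)
    (hle : ∀ x ∈ C, h x ≤ -(a * ‖x‖)) : IntegrableOn (fun x => Real.exp (h x)) C μ :=
  (integrable_exp_neg_mul_norm μ ha).integrableOn.mono' (by fun_prop) <|
    (ae_restrict_iff' hC).2 <| Filter.Eventually.of_forall fun x hx => by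
      rw [Real.norm_eq_abs, abs_of_pos (Real.exp_pos _)]
      exact Real.exp_le_exp.2 (hle x hx)

end ExpDecay

theorem IsCompact.exists_pos_le_of_monotone {X : Type*} [TopologicalSpace X] {S : Set X}
    (hS : IsCompact S) {u : ℕ → X → ℝ} (hu : ∀ n, Continuous (u n)) (hmono : Monotone u)
    (hpos : ∀ x ∈ S, ∃ n, 0 < u n x) : ∃ n, ∃ δ > 0, ∀ x ∈ S, δ ≤ u n x := by
  obtain ⟨n, hn⟩ := hS.elim_directed_cover (fun n => {x | 0 < u n x})
    (fun n => isOpen_lt continuous_const (hu n))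
    (fun x hx => Set.mem_iUnion.2 (hpos x hx))
    (Monotone.directed_le fun _ _ h _ (hx : 0 < _) => hx.trans_le (hmono h _))
  obtain ⟨δ, hδ, hle⟩ := hS.exists_forall_le' (hu n).continuousOn hn
  exact ⟨n, δ, hδ, hle⟩

theorem exists_pos_add_mul_sub_mul {a p q : ℝ} (hp : 0 ≤ p) (hq : 0 ≤ q)
    (hpos : p = 0 → 0 < a) : ∃ n : ℕ, 0 < a + n * p - (n + 1 : ℝ)⁻¹ * q := by
  rcases hp.eq_or_lt with hp0 | hp0
  · have ha := hpos hp0.symm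
    obtain ⟨n, hn⟩ := exists_nat_gt (q / a)
    refine ⟨n, ?_⟩
    rw [← hp0, mul_zero, add_zero, sub_pos, inv_mul_lt_iff₀ (by positivity)]
    rw [div_lt_iff₀ ha] at hn
    nlinarith
  · obtain ⟨n, hn⟩ := exists_nat_gt ((q - a) / p)
    refine ⟨n, ?_⟩
    rw [div_lt_iff₀ hp0] at hn
    have : (n + 1 : ℝ)⁻¹ * q ≤ q :=
      mul_le_of_le_one_left hq (inv_le_one_of_one_le₀ (by linarith [n.cast_nonneg (α := ℝ)]))
    linarith

theorem IsCompact.exists_pos_le_add_mul_sub_mul {X : Type*} [TopologicalSpace X] {S : Set X}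
    (hS : IsCompact S) {f φ ψ : X → ℝ} (hf : Continuous f) (hφ : Continuous φ)
    (hψ : Continuous ψ) (hφ0 : ∀ x, 0 ≤ φ x) (hψ0 : ∀ x, 0 ≤ ψ x)
    (hpos : ∀ x ∈ S, φ x = 0 → 0 < f x) :
    ∃ N c : ℝ, 0 < c ∧ ∃ δ > 0, ∀ x ∈ S, δ ≤ f x + N * φ x - c * ψ x := by
  -- one increasing family yields both the weight `N = n` and the constant `c = 1 / (n + 1)`
  obtain ⟨n, δ, hδ, hle⟩ := hS.exists_pos_le_of_monotone
    (u := fun n x => f x + n * φ x - (n + 1 : ℝ)⁻¹ * ψ x) (fun n => by fun_prop)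
    (fun n m hnm x => by
      have hnm' : (n : ℝ) ≤ m := by exact_mod_cast hnm
      dsimp only
      gcongr
      · exact hφ0 x
      · exact hψ0 x)
    (fun x hx => exists_pos_add_mul_sub_mul (hφ0 x) (hψ0 x) (hpos x hx))
  exact ⟨n, (n + 1 : ℝ)⁻¹, by positivity, δ, hδ, hle⟩

theorem neg_mul_max_sub_le {c s t u : ℝ} (hs : -c ≤ s) (hu : max 0 (-t) ≤ u) :
    -c * max 0 t - max s 0 * u ≤ s * t := by
  have hu0 : 0 ≤ u := (le_max_left _ _).trans hu
  have htu : -t ≤ u := (le_max_right _ _).trans hu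
  rcases le_total 0 t with ht | ht
  · rw [max_eq_right ht]
    nlinarith [le_max_right s 0]
  · rw [max_eq_left ht]
    rcases le_total s 0 with hs0 | hs0
    · rw [max_eq_right hs0]; nlinarith
    · rw [max_eq_left hs0]; nlinarith

theorem max_zero_neg_sum_mul_le {J : Type*} [Fintype J] {d a : J → ℝ} (hd : ∀ j, 0 ≤ d j) :
    max 0 (-∑ j, d j * a j) ≤ (∑ j, d j) * ∑ j, max 0 (-a j) := by
  have hsum : 0 ≤ ∑ j, d j := Finset.sum_nonneg fun j _ => hd j
  refine max_le (mul_nonneg hsum (Finset.sum_nonneg fun j _ => le_max_left _ _)) ?_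
  calc -∑ j, d j * a j = ∑ j, d j * -a j := by simp [Finset.sum_neg_distrib]
    _ ≤ ∑ j, d j * max 0 (-a j) :=
        Finset.sum_le_sum fun j _ => mul_le_mul_of_nonneg_left (le_max_right _ _) (hd j)
    _ ≤ ∑ j, (∑ j, d j) * max 0 (-a j) :=
        Finset.sum_le_sum fun j _ => mul_le_mul_of_nonneg_right
          (Finset.single_le_sum (fun j _ => hd j) (Finset.mem_univ j)) (le_max_left _ _)
    _ = (∑ j, d j) * ∑ j, max 0 (-a j) := by rw [Finset.mul_sum]

section SumPosPart

variable {W : Type*} [AddCommGroup W] [Module ℝ W] {J : Type*} [Fintype J]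

noncomputable def sumPosPart (ℓ : J → W →ₗ[ℝ] ℝ) (x : W) : ℝ := ∑ j, max 0 (ℓ j x)

variable (ℓ : J → W →ₗ[ℝ] ℝ)

theorem sumPosPart_nonneg (x : W) : 0 ≤ sumPosPart ℓ x :=
  Finset.sum_nonneg fun _ _ => le_max_left _ _

theorem sumPosPart_eq_zero_iff {x : W} : sumPosPart ℓ x = 0 ↔ ∀ j, ℓ j x ≤ 0 := by
  simp [sumPosPart, Finset.sum_eq_zero_iff_of_nonneg]

theorem sumPosPart_smul {r : ℝ} (hr : 0 ≤ r) (x : W) :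
    sumPosPart ℓ (r • x) = r * sumPosPart ℓ x := by
  simp only [sumPosPart, map_smul, smul_eq_mul, Finset.mul_sum, mul_max_of_nonneg _ _ hr,
    mul_zero]

theorem continuous_sumPosPart [TopologicalSpace W] [IsTopologicalAddGroup W]
    [ContinuousSMul ℝ W] [T2Space W] [FiniteDimensional ℝ W] : Continuous (sumPosPart ℓ) :=
  continuous_finsetSum _ fun j _ =>
    continuous_const.max (ℓ j).continuous_of_finiteDimensional

end SumPosPart

theorem neg_mul_sumPosPart_sub_le_sum {W : Type*} [AddCommGroup W] [Module ℝ W]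
    {I J : Type*} [Fintype I] [Fintype J] {chi : I → W →ₗ[ℝ] ℝ} {lam : J → W →ₗ[ℝ] ℝ}
    {d : I → J → ℝ} (hd : ∀ i j, 0 ≤ d i j) (hchi : ∀ i, chi i = ∑ j, d i j • lam j)
    {c : ℝ} {σ : I → ℝ} (hσ : ∀ i, -c ≤ σ i) (x : W) :
    -c * sumPosPart chi x - (∑ i, max (σ i) 0 * ∑ j, d i j) * sumPosPart (-lam) x
      ≤ ∑ i, σ i * chi i x := by
  have hterm : ∀ i, -c * max 0 (chi i x) - max (σ i) 0 * ((∑ j, d i j) * sumPosPart (-lam) x)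
      ≤ σ i * chi i x := fun i => by
    refine neg_mul_max_sub_le (hσ i) ?_
    simpa [hchi i, sumPosPart] using max_zero_neg_sum_mul_le (a := fun j => lam j x) (hd i)
  calc _ = ∑ i, (-c * max 0 (chi i x)
        - max (σ i) 0 * ((∑ j, d i j) * sumPosPart (-lam) x)) := by
        rw [Finset.sum_sub_distrib, ← Finset.mul_sum, Finset.sum_mul]
        simp only [mul_assoc]
        rfl
    _ ≤ _ := Finset.sum_le_sum fun i _ => hterm i

theorem le_mul_norm_of_le_on_unit_sphere {E : Type*} [NormedAddCommGroup E] [NormedSpace ℝ E]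
    {C : Set E} (hC : ∀ x ∈ C, ∀ r : ℝ, 0 < r → r • x ∈ C) {F : E → ℝ}
    (hF : ∀ r : ℝ, 0 < r → ∀ x, F (r • x) = r * F x) {δ : ℝ}
    (hδ : ∀ x ∈ C, ‖x‖ = 1 → δ ≤ F x) {x : E} (hx : x ∈ C) : δ * ‖x‖ ≤ F x := by
  rcases eq_or_ne x 0 with rfl | hx0
  · have := hF 2 two_pos 0
    rw [smul_zero] at this
    rw [norm_zero, mul_zero]
    linarith
  · have hn : 0 < ‖x‖ := norm_pos_iff.2 hx0
    have hunit := hδ _ (hC x hx _ (inv_pos.2 hn))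
      (by rw [norm_smul, norm_inv, norm_norm, inv_mul_cancel₀ hn.ne'])
    calc δ * ‖x‖ ≤ F (‖x‖⁻¹ • x) * ‖x‖ := by gcongr
      _ = F x := by rw [hF _ (inv_pos.2 hn)]; field_simp

theorem convergence_lemma_polyhedral_cone_coeffs_general {W : Type*} [NormedAddCommGroup W]
    [NormedSpace ℝ W] [FiniteDimensional ℝ W] [MeasurableSpace W] [BorelSpace W]
    (μ : Measure W) [μ.IsAddHaarMeasure]
    {I J K : Type*} [Fintype I] [Fintype J]
    (chi : I → (W →ₗ[ℝ] ℝ)) (lam : J → (W →ₗ[ℝ] ℝ))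
    (f : W → ℝ) (hf : Continuous f)
    (hhom : ∀ r : ℝ, 0 < r → ∀ v : W, f (r • v) = r * f v)
    (g : K → (W →ₗ[ℝ] ℝ)) (C : Set W) (hC : C = {x : W | ∀ k, 0 ≤ g k x})
    (hpos : ∀ x ∈ C, (∀ j, 0 ≤ lam j x) → x ≠ 0 → 0 < f x)
    (hchi : ∀ i, ∃ d : J → ℝ, (∀ j, 0 ≤ d j) ∧ chi i = ∑ j, d j • lam j) :
    ∃ c : ℝ, 0 < c ∧ ∀ σ : I → ℝ, (∀ i, -c < σ i) →
      ∃ N₀ : ℝ, ∀ N : ℝ, N₀ ≤ N →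
        IntegrableOn
          (fun x => Real.exp (-f x - N * ∑ j, max 0 (-(lam j x)) - ∑ i, σ i * chi i x))
          C μ := by
  choose d hd hdchi using hchi
  have hCclosed : IsClosed C := by
    rw [hC, Set.ofPred_forall]
    exact isClosed_iInter fun k =>
      isClosed_le continuous_const (g k).continuous_of_finiteDimensional
  have hCcone : ∀ x ∈ C, ∀ r : ℝ, 0 < r → r • x ∈ C := fun x hx r hr => by
    subst hC; exact fun k => by simpa using mul_nonneg hr.le (hx k)
  obtain ⟨N₁, c, hc, δ, hδ, hS⟩ :=
    ((isCompact_sphere (0 : W) 1).inter_right hCclosed).exists_pos_le_add_mul_sub_mul hf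
      (continuous_sumPosPart (-lam)) (continuous_sumPosPart chi) (sumPosPart_nonneg _)
      (sumPosPart_nonneg _) fun x hx hx0 => hpos x hx.2
        (fun j => neg_nonpos.1 ((sumPosPart_eq_zero_iff _).1 hx0 j))
        (ne_zero_of_mem_unit_sphere ⟨x, hx.1⟩)
  refine ⟨c, hc, fun σ hσ => ⟨N₁ + ∑ i, max (σ i) 0 * ∑ j, d i j, fun N hN => ?_⟩⟩
  have hlower : ∀ x ∈ C, δ * ‖x‖ ≤ f x + N₁ * sumPosPart (-lam) x - c * sumPosPart chi x :=
    fun x hx => le_mul_norm_of_le_on_unit_sphere hCcone (fun r hr x => by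
      rw [hhom r hr, sumPosPart_smul _ hr.le, sumPosPart_smul _ hr.le]; ring)
      (fun y hy hy1 => hS y ⟨mem_sphere_zero_iff_norm.2 hy1, hy⟩) hx
  refine integrableOn_exp_of_le_neg_mul_norm μ hCclosed.measurableSet
    (by fun_prop) hδ fun x hx => ?_
  have hsum := neg_mul_sumPosPart_sub_le_sum hd hdchi (fun i => (hσ i).le) x
  have hN' := mul_le_mul_of_nonneg_right hN (sumPosPart_nonneg (-lam) x)
  change -f x - N * sumPosPart (-lam) x - _ ≤ _
  linarith [hlower x hx]

/-- In the setting of the convergence lemma (closed polyhedral cone `C`, continuous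
positively 1-homogeneous `f` strictly positive on `{x ∈ C : lam j x ≥ 0 ∀ j} \ {0}`),
assume in addition that each `chi i` lies in the cone `ℝ_{≥0}{lam j : j ∈ J}`.  Then
there is `c > 0` such that for every choice of real numbers `σ i > −c`, the integral
`∫_C exp (−f x − N ∑_j max 0 (−lam j x) − ∑_i σ i * chi i x) dx`
converges for all sufficiently large `N` (depending on `σ`). -/
theorem convergence_lemma_polyhedral_cone_coeffs {W : Type*} [NormedAddCommGroup W]
    [NormedSpace ℝ W] [FiniteDimensional ℝ W] [MeasurableSpace W] [BorelSpace W]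
    (μ : Measure W) [μ.IsAddHaarMeasure]
    {I J K : Type*} [Fintype I] [Fintype J] [Fintype K]
    (chi : I → (W →ₗ[ℝ] ℝ)) (lam : J → (W →ₗ[ℝ] ℝ))
    (f : W → ℝ) (hf : Continuous f)
    (hhom : ∀ r : ℝ, 0 < r → ∀ v : W, f (r • v) = r * f v)
    (g : K → (W →ₗ[ℝ] ℝ)) (C : Set W) (hC : C = {x : W | ∀ k, 0 ≤ g k x})
    (hpos : ∀ x ∈ C, (∀ j, 0 ≤ lam j x) → x ≠ 0 → 0 < f x)
    (hchi : ∀ i, ∃ d : J → ℝ, (∀ j, 0 ≤ d j) ∧ chi i = ∑ j, d j • lam j) :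
    ∃ c : ℝ, 0 < c ∧ ∀ σ : I → ℝ, (∀ i, -c < σ i) →
      ∃ N₀ : ℝ, ∀ N : ℝ, N₀ ≤ N →
        IntegrableOn
          (fun x => Real.exp (-f x - N * ∑ j, max 0 (-(lam j x)) - ∑ i, σ i * chi i x))
          C μ :=
  convergence_lemma_polyhedral_cone_coeffs_general μ chi lam f hf hhom g C hC hpos hchi
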